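/- arXiv:2311.13377 — 2 statements merged into one kernel-verified Lean document; each statement's English description precedes it below -/
import Mathlib

section
/- Let T be a strongly connected tournament of order n ≥ 9, and assume that there exists at most one non-critical vertex w of T such that the strongly connected subtournament T−w is isomorphic to T_{n−2,n−1}. If T has at least 4 non-critical vertices, then T contains at least 6 strongly connected subtournaments of order n−2 (s_{n−2}(T) ≥ 6). Moreover, if T has at least 5 non-critical vertices, then s_{n−2}(T) ≥ 7. -/
/-- A tournament on a vertex type `V`: every ordered pair of distinct vertices
carries exactly one arc. `adj v w = true` means there is an arc from `v` to `w`
(`v` dominates `w`). -/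
structure Tournament (V : Type*) where
  adj : V → V → Bool
  irrefl : ∀ v, adj v v = false
  compl : ∀ v w, v ≠ w → adj v w = !adj w v

namespace Tournament

variable {V : Type*} {W : Type*}

/-- The subtournament induced on a set of vertices. -/
def restrict (T : Tournament V) (s : Set V) : Tournament s where
  adj a b := T.adj a b
  irrefl a := T.irrefl a
  compl a b h := T.compl a b (fun hab => h (Subtype.ext hab))

/-- A tournament is strongly connected if every vertex can be reached from
every other one by a directed path. -/
def Strong (T : Tournament V) : Prop :=
  ∀ v w : V, Relation.ReflTransGen (fun a b => T.adj a b = true) v w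

/-- A vertex of a tournament is non-critical if deleting it leaves a strongly
connected tournament. -/
def Noncritical (T : Tournament V) (w : V) : Prop :=
  (T.restrict {x | x ≠ w}).Strong

/-- There is a directed walk of length `k` from `v` to `w`. -/
def HasWalk (T : Tournament V) (v w : V) (k : ℕ) : Prop :=
  ∃ f : Fin (k + 1) → V, f 0 = v ∧ f (Fin.last k) = w ∧
    ∀ i : Fin k, T.adj (f i.castSucc) (f i.succ) = true

/-- The distance from `v` to `w`: the length of a shortest directed path. -/
noncomputable def dist (T : Tournament V) (v w : V) : ℕ :=
  sInf {k | T.HasWalk v w k}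

/-- The diameter: the maximum distance over ordered pairs of distinct vertices. -/
noncomputable def diam (T : Tournament V) : ℕ :=
  sSup {m | ∃ v w : V, v ≠ w ∧ T.dist v w = m}

/-- Cyclic successor on `Fin ℓ`. -/
def cyc {ℓ : ℕ} (i : Fin ℓ) : Fin ℓ :=
  if h : i.val + 1 < ℓ then ⟨i.val + 1, h⟩ else ⟨0, i.pos⟩

/-- The number of circuits (directed cycles through distinct vertices) of
length `ℓ` in `T`.  Each circuit is represented by exactly `ℓ` cyclic
parametrisations, whence the division. -/
noncomputable def circCount (T : Tournament V) (ℓ : ℕ) : ℕ :=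
  Nat.card {f : Fin ℓ → V // Function.Injective f ∧
    ∀ i : Fin ℓ, T.adj (f i) (f (cyc i)) = true} / ℓ

/-- The number of circuits of length `ℓ` in `T` passing through the vertex `w`. -/
noncomputable def circCountAt (T : Tournament V) (ℓ : ℕ) (w : V) : ℕ :=
  Nat.card {f : Fin ℓ → V // Function.Injective f ∧
    (∀ i : Fin ℓ, T.adj (f i) (f (cyc i)) = true) ∧ ∃ i, f i = w} / ℓ

/-- The number of strongly connected subtournaments of order `ℓ` in `T`. -/
noncomputable def strongSubCount (T : Tournament V) (ℓ : ℕ) : ℕ :=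
  Nat.card {s : Finset V // s.card = ℓ ∧ (T.restrict ↑s).Strong}

/-- Isomorphism of tournaments. -/
def Iso (T : Tournament V) (S : Tournament W) : Prop :=
  ∃ e : V ≃ W, ∀ a b : V, T.adj a b = S.adj (e a) (e b)

/-- Build a tournament from the function `f` recording which arcs point
"upwards" with respect to a linear order on the vertices. -/
def ofFn [LinearOrder V] (f : V → V → Bool) : Tournament V where
  adj u v := if u < v then f u v else if v < u then !f v u else false
  irrefl v := by simp
  compl u v h := by
    rcases lt_trichotomy u v with h1 | h1 | h1
    · simp [h1, not_lt_of_gt h1]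
    · exact absurd h1 h
    · simp [h1, not_lt_of_gt h1]

/-- The tournament `T_{n-1,n}(z_0,…,z_{n-1})`: `z_i → z_{i+1}` and `z_j → z_i`
for `j > i + 1`. -/
def lineT (n : ℕ) : Tournament (Fin n) :=
  ofFn fun i j => decide (j.val = i.val + 1)

end Tournament

/-!
A strong tournament on `m ≥ 3` vertices has a Hamiltonian cycle, found by repeatedly lengthening
a cycle: an outside vertex with arcs both to and from the cycle can be inserted into it, and
otherwise strong connectivity gives an arc from a vertex dominated by the cycle to one dominating
it, and both can be added. Number the vertices along the cycle `0 → 1 → ⋯ → m - 1 → 0`. A vertex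
`c` is non-critical as soon as every cut of the path `c + 1 → ⋯ → c - 1` is crossed by a backward
arc. Each forward 2-chord `s → s + 2` makes `s + 1` non-critical, and when there are at most two
of them, the backward 2-chords `s + 2 → s` make other vertices non-critical, unless the two forward
2-chords are consecutive and every longer chord points backwards, i.e. the tournament is
`T_{m-1,m}`. So for `m ≥ 7` there are at least two non-critical vertices, and at least three
unless the tournament is `T_{m-1,m}`.

Applied to `T - w` for each of the `k` non-critical vertices `w` of `T`, this gives at least three
vertices `x` with `T - w - x` strong, or two for the single `w` with `T - w ≅ T_{n-2,n-1}`. Every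
strong subtournament of order `n - 2` comes from at most two such pairs `(w, x)`, hence
`3k - 1 ≤ 2 s_{n-2}(T)`.
-/

open Fin.CommRing

theorem Relation.ReflTransGen.exists_rel_mem_not_mem {α : Type*} {r : α → α → Prop} {s : Set α}
    {a b : α} (h : Relation.ReflTransGen r a b) (ha : a ∈ s) (hb : b ∉ s) :
    ∃ u ∈ s, ∃ u' ∉ s, r u u' := by
  induction h with
  | refl => exact absurd ha hb
  | @tail x y _ hxy ih =>
    by_cases hx : x ∈ s
    · exact ⟨x, hx, y, hb, hxy⟩
    · exact ih hx

theorem Fin.natCast_ne_natCast {m : ℕ} [NeZero m] {a b : ℕ} (ha : a < m) (hb : b < m)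
    (h : a ≠ b) : (a : Fin m) ≠ b := fun hab =>
  h (by simpa [Fin.val_cast_of_lt ha, Fin.val_cast_of_lt hb] using congrArg Fin.val hab)

theorem Fin.natCast_sub_eq_neg {m : ℕ} [NeZero m] {a : ℕ} (h : a ≤ m) :
    ((m - a : ℕ) : Fin m) = -a := by
  rw [Nat.cast_sub h, Fin.natCast_self, zero_sub]

theorem Fin.add_natCast_ne_add_natCast {m : ℕ} [NeZero m] (c : Fin m) {a b : ℕ} (ha : a < m)
    (hb : b < m) (h : a ≠ b) : c + a ≠ c + b := fun hab =>
  Fin.natCast_ne_natCast ha hb h (add_left_cancel hab)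

theorem Fin.self_ne_add_natCast {m : ℕ} [NeZero m] (c : Fin m) {a : ℕ} (h₀ : 0 < a) (ha : a < m) :
    c ≠ c + a := by
  simpa using Fin.add_natCast_ne_add_natCast c (NeZero.pos m) ha h₀.ne

theorem Finset.three_mul_card_le_sum_add_one {α : Type*} (s : Finset α) (f : α → ℕ)
    (p : α → Prop) [DecidablePred p] (h₂ : ∀ a ∈ s, 2 ≤ f a) (h₃ : ∀ a ∈ s, ¬ p a → 3 ≤ f a)
    (hp : ∀ a ∈ s, ∀ b ∈ s, p a → p b → a = b) :
    3 * s.card ≤ ∑ a ∈ s, f a + 1 := by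
  have hle : (s.filter p).card ≤ 1 := Finset.card_le_one.2 fun a ha b hb =>
    hp a (Finset.mem_filter.1 ha).1 b (Finset.mem_filter.1 hb).1 (Finset.mem_filter.1 ha).2
      (Finset.mem_filter.1 hb).2
  calc 3 * s.card = ∑ a ∈ s, 3 := by simp [mul_comm]
    _ ≤ ∑ a ∈ s, (f a + if p a then 1 else 0) := Finset.sum_le_sum fun a ha => by
        by_cases h : p a
        · simp only [h, if_true]; linarith [h₂ a ha]
        · simp only [h, if_false]; linarith [h₃ a ha h]
    _ = ∑ a ∈ s, f a + (s.filter p).card := by rw [Finset.sum_add_distrib, Finset.card_filter]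
    _ ≤ ∑ a ∈ s, f a + 1 := by gcongr

namespace Tournament

variable {V W X : Type*}

section Basic

variable (T : Tournament V)

lemma ne_of_adj {x y : V} (h : T.adj x y = true) : x ≠ y := by
  rintro rfl
  simp [T.irrefl] at h

lemma adj_eq_true_iff {x y : V} (h : x ≠ y) : T.adj x y = true ↔ T.adj y x = false := by
  simp [T.compl x y h]

lemma adj_eq_false_of_adj {x y : V} (h : T.adj x y = true) : T.adj y x = false :=
  (T.adj_eq_true_iff (T.ne_of_adj h)).1 h

lemma adj_of_adj_eq_false {x y : V} (h : x ≠ y) (h' : T.adj x y = false) : T.adj y x = true :=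
  (T.adj_eq_true_iff h.symm).2 h'

def comap (S : Tournament W) (e : V ≃ W) : Tournament V where
  adj a b := S.adj (e a) (e b)
  irrefl _ := S.irrefl _
  compl _ _ h := S.compl _ _ (e.injective.ne h)

lemma iso_comap (S : Tournament W) (e : V ≃ W) : (S.comap e).Iso S := ⟨e, fun _ _ => rfl⟩

lemma strong_restrict_of_path (s : Set V) {N : ℕ} (p : ℕ → V)
    (hps : ∀ i < N, p i ∈ s) (hsurj : ∀ x ∈ s, ∃ i < N, p i = x)
    (hpath : ∀ i, i + 1 < N → T.adj (p i) (p (i + 1)) = true)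
    (hback : ∀ k, k + 1 < N → ∃ a ≤ k, ∃ b, k < b ∧ b < N ∧ T.adj (p b) (p a) = true) :
    (T.restrict s).Strong := by
  let R := Relation.ReflTransGen fun a b : s => (T.restrict s).adj a b = true
  let q : ∀ i, i < N → s := fun i hi => ⟨p i, hps i hi⟩
  have hfwd : ∀ i j (hi : i < N) (hj : j < N), i ≤ j → R (q i hi) (q j hj) := by
    intro i j hi hj hij
    induction j, hij using Nat.le_induction with
    | base => exact .refl
    | succ j hij ih => exact (ih (by omega)).tail (hpath j hj)
  have hzero : ∀ j (hj : j < N), R (q j hj) (q 0 (by omega)) := by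
    intro j
    induction j using Nat.strong_induction_on with
    | _ j ih =>
      intro hj
      rcases j with _ | j
      · exact .refl
      · obtain ⟨a, ha, b, hb, hbN, hba⟩ := hback j hj
        have hba' : (T.restrict s).adj (q b hbN) (q a (by omega)) = true := hba
        exact ((hfwd _ _ hj hbN (by omega)).tail hba').trans (ih a (by omega) (by omega))
  rintro ⟨x, hx⟩ ⟨y, hy⟩
  obtain ⟨i, hi, rfl⟩ := hsurj x hx
  obtain ⟨j, hj, rfl⟩ := hsurj y hy
  exact (hzero i hi).trans (hfwd 0 j (by omega) hj (Nat.zero_le j))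

variable {T}

lemma Iso.symm {S : Tournament W} (h : T.Iso S) : S.Iso T := by
  obtain ⟨e, he⟩ := h
  exact ⟨e.symm, fun a b => by rw [he, e.apply_symm_apply, e.apply_symm_apply]⟩

lemma Iso.trans {S : Tournament W} {R : Tournament X} (h₁ : T.Iso S) (h₂ : S.Iso R) :
    T.Iso R := by
  obtain ⟨e, he⟩ := h₁
  obtain ⟨f, hf⟩ := h₂
  exact ⟨e.trans f, fun a b => (he a b).trans (hf _ _)⟩

lemma Iso.strong {S : Tournament W} (h : T.Iso S) (hT : T.Strong) : S.Strong := by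
  obtain ⟨e, he⟩ := h
  intro v w
  simpa [Function.onFun] using Relation.ReflTransGen.lift (p := fun a b => S.adj a b = true) e
    (fun x y hxy => by change S.adj (e x) (e y) = true; rwa [← he]) _ _ (hT (e.symm v) (e.symm w))

lemma noncritical_comap_iff (S : Tournament W) (e : V ≃ W) (v : V) :
    (S.comap e).Noncritical v ↔ S.Noncritical (e v) := by
  have hiso : ((S.comap e).restrict {x | x ≠ v}).Iso (S.restrict {y | y ≠ e v}) :=
    ⟨e.subtypeEquiv fun a => e.injective.ne_iff.symm, fun _ _ => rfl⟩
  exact ⟨hiso.strong, hiso.symm.strong⟩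

lemma card_noncritical_comap (S : Tournament W) (e : V ≃ W) :
    Nat.card {x // (S.comap e).Noncritical x} = Nat.card {y // S.Noncritical y} :=
  Nat.card_congr (e.subtypeEquiv (noncritical_comap_iff S e))

lemma card_le_card_noncritical [Finite V] (s : Finset V) (hs : ∀ x ∈ s, T.Noncritical x) :
    s.card ≤ Nat.card {x // T.Noncritical x} := by
  classical
  have := Fintype.ofFinite V
  rw [Nat.card_eq_fintype_card, Fintype.card_subtype]
  exact Finset.card_le_card fun x hx => Finset.mem_filter.2 ⟨Finset.mem_univ x, hs x hx⟩

lemma three_le_card_noncritical [Finite V] {x y z : V} (hxy : x ≠ y)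
    (hxz : x ≠ z) (hyz : y ≠ z) (hx : T.Noncritical x) (hy : T.Noncritical y)
    (hz : T.Noncritical z) : 3 ≤ Nat.card {x // T.Noncritical x} := by
  classical
  rw [← Finset.card_eq_three.2 ⟨x, y, z, hxy, hxz, hyz, rfl⟩]
  exact card_le_card_noncritical _ (by simp [hx, hy, hz])

end Basic

/-- `p 0 → p 1 → ⋯ → p (k - 1) → p 0` is a directed cycle through `k` distinct vertices;
the values of `p` beyond `k` play no role. -/
def IsCycle (S : Tournament X) (p : ℕ → X) (k : ℕ) : Prop :=
  Set.InjOn p (Set.Iio k) ∧ ∀ i < k, S.adj (p i) (p ((i + 1) % k)) = true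

section Cycle

variable (S : Tournament X)

lemma exists_isCycle_three (hS : S.Strong) {v w : X} (hvw : v ≠ w) : ∃ p, S.IsCycle p 3 := by
  obtain ⟨u, -, hu⟩ : ∃ u, _ ∧ S.adj u v = true :=
    (hS w v).cases_tail.resolve_left hvw
  have hu' : u ∉ {x | x = v ∨ S.adj v x = true} := by
    rintro (rfl | h)
    · exact S.ne_of_adj hu rfl
    · simp [S.adj_eq_false_of_adj h] at hu
  obtain ⟨a, ha, b, hb, hab⟩ := (hS v u).exists_rel_mem_not_mem (Or.inl rfl) hu'
  simp only [Set.mem_ofPred_eq, not_or] at ha hb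
  have hva : S.adj v a = true := ha.resolve_left fun h => hb.2 (h ▸ hab)
  have hbv : S.adj b v = true := S.adj_of_adj_eq_false (Ne.symm hb.1) (by simpa using hb.2)
  refine ⟨fun j => if j = 0 then v else if j = 1 then a else b, fun i hi j hj hij => ?_,
    fun i hi => ?_⟩
  · simp only [Set.mem_Iio] at hi hj
    interval_cases i <;> interval_cases j <;>
      simp_all [S.ne_of_adj hva, S.ne_of_adj hab, (S.ne_of_adj hbv).symm]
  · interval_cases i <;> simp [hva, hab, hbv]

variable {S}

lemma IsCycle.le_card [Finite X] {p : ℕ → X} {k : ℕ} (hp : S.IsCycle p k) : k ≤ Nat.card X := by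
  simpa using Nat.card_le_card_of_injective (fun i : Fin k => p i)
    fun i j h => Fin.ext (hp.1 i.isLt j.isLt h)

lemma exists_adj_adj_succ_mod {p : ℕ → X} {k : ℕ} {v : X}
    (hv : ∀ i < k, p i ≠ v) {i₀ j₀ : ℕ} (hi₀ : i₀ < k) (hj₀ : j₀ < k)
    (hin : S.adj (p i₀) v = true) (hout : S.adj v (p j₀) = true) :
    ∃ i < k, S.adj (p i) v = true ∧ S.adj v (p ((i + 1) % k)) = true := by
  by_contra! H
  have hall : ∀ t, S.adj (p ((i₀ + t) % k)) v = true := by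
    intro t
    induction t with
    | zero => simpa [Nat.mod_eq_of_lt hi₀] using hin
    | succ t ih =>
      have hlt := Nat.mod_lt (i₀ + t) (show 0 < k by omega)
      have hlt' := Nat.mod_lt ((i₀ + t) % k + 1) (show 0 < k by omega)
      have := S.adj_of_adj_eq_false (hv _ hlt').symm
        (by simpa only [Bool.not_eq_true] using H _ hlt ih)
      simpa only [Nat.mod_add_mod, add_assoc] using this
  have := hall (j₀ + k - i₀)
  rw [show i₀ + (j₀ + k - i₀) = j₀ + k by omega, Nat.add_mod_right,
    Nat.mod_eq_of_lt hj₀] at this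
  simp [S.adj_eq_false_of_adj hout] at this

lemma IsCycle.adj_succ {p : ℕ → X} {k : ℕ} (hp : S.IsCycle p k) {i : ℕ} (h : i + 1 < k) :
    S.adj (p i) (p (i + 1)) = true := by
  simpa [Nat.mod_eq_of_lt h] using hp.2 i (by omega)

lemma IsCycle.adj_last {p : ℕ → X} {k : ℕ} (hp : S.IsCycle p k) (hk : 0 < k) :
    S.adj (p (k - 1)) (p 0) = true := by
  simpa [Nat.sub_add_cancel hk] using hp.2 (k - 1) (by omega)

lemma IsCycle.of_adj {p : ℕ → X} {k : ℕ} (hk : 0 < k) (hinj : Set.InjOn p (Set.Iio k))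
    (hsucc : ∀ i, i + 1 < k → S.adj (p i) (p (i + 1)) = true)
    (hlast : S.adj (p (k - 1)) (p 0) = true) : S.IsCycle p k := by
  refine ⟨hinj, fun i hi => ?_⟩
  rcases Nat.lt_or_ge (i + 1) k with h | h
  · rw [Nat.mod_eq_of_lt h]; exact hsucc i h
  · obtain rfl : i = k - 1 := by omega
    rwa [Nat.sub_add_cancel hk, Nat.mod_self]

lemma IsCycle.insert {p : ℕ → X} {k : ℕ} (hp : S.IsCycle p k) {v : X} (hv : ∀ i < k, p i ≠ v)
    {i : ℕ} (hi : i < k) (hin : S.adj (p i) v = true)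
    (hout : S.adj v (p ((i + 1) % k)) = true) :
    S.IsCycle (fun j => if j ≤ i then p j else if j = i + 1 then v else p (j - 1)) (k + 1) := by
  refine IsCycle.of_adj (by omega) (fun j₁ hj₁ j₂ hj₂ h => ?_) (fun j hj => ?_) ?_
  · simp only [Set.mem_Iio] at hj₁ hj₂
    split_ifs at h <;> first
      | omega
      | exact absurd h (hv _ (by omega))
      | exact absurd h.symm (hv _ (by omega))
      | have := hp.1 (by simp only [Set.mem_Iio]; omega) (by simp only [Set.mem_Iio]; omega) h
        omega
  · rcases lt_trichotomy j i with hji | rfl | hji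
    · rw [if_pos hji.le, if_pos (by omega : j + 1 ≤ i)]
      exact hp.adj_succ (by omega)
    · rw [if_pos le_rfl, if_neg (by omega), if_pos rfl]
      exact hin
    · obtain rfl | hji' := (show j = i + 1 ∨ i + 1 < j by omega)
      · rw [if_neg (by omega), if_pos rfl, if_neg (by omega), if_neg (by omega)]
        simpa [Nat.mod_eq_of_lt (show i + 1 < k by omega)] using hout
      · rw [if_neg (by omega), if_neg (by omega), if_neg (by omega), if_neg (by omega)]
        simpa [Nat.sub_add_cancel (show 1 ≤ j by omega)] using hp.adj_succ (i := j - 1) (by omega)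
  · rw [if_pos (Nat.zero_le i), if_neg (by omega), Nat.add_sub_cancel]
    split_ifs with h
    · obtain rfl : k = i + 1 := by omega
      simpa using hout
    · exact hp.adj_last (by omega)

lemma IsCycle.extend_two {p : ℕ → X} {k : ℕ} (hp : S.IsCycle p k) (hk : 0 < k) {a b : X}
    (ha : ∀ i < k, p i ≠ a) (hb : ∀ i < k, p i ≠ b) (hab : a ≠ b)
    (hadom : ∀ i < k, S.adj a (p i) = true) (hbdom : ∀ i < k, S.adj (p i) b = true)
    (hba : S.adj b a = true) :
    S.IsCycle (fun j => if j < k then p j else if j = k then b else a) (k + 2) := by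
  refine IsCycle.of_adj (by omega) (fun j₁ hj₁ j₂ hj₂ h => ?_) (fun j hj => ?_) ?_
  · simp only [Set.mem_Iio] at hj₁ hj₂
    split_ifs at h <;> first
      | omega
      | exact absurd h (ha _ (by omega))
      | exact absurd h (hb _ (by omega))
      | exact absurd h.symm (ha _ (by omega))
      | exact absurd h.symm (hb _ (by omega))
      | exact absurd h hab
      | exact absurd h.symm hab
      | exact hp.1 (by simp only [Set.mem_Iio]; omega) (by simp only [Set.mem_Iio]; omega) h
  · split_ifs <;> first
      | omega
      | exact hp.adj_succ (by omega)
      | exact hba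
      | exact hbdom _ (by omega)
  · simp only [if_pos hk, show ¬ k + 2 - 1 < k by omega, show k + 2 - 1 ≠ k by omega,
      if_false]
    exact hadom 0 hk

lemma IsCycle.exists_longer [Finite X] (hS : S.Strong) {p : ℕ → X} {k : ℕ}
    (hp : S.IsCycle p k) (hk : 0 < k) (hlt : k < Nat.card X) :
    ∃ q k', k < k' ∧ S.IsCycle q k' := by
  set O := {v | ∀ i < k, p i ≠ v}
  obtain ⟨v₀, hv₀⟩ : O.Nonempty := by
    by_contra! h
    have : Nat.card X ≤ k := by
      simpa using Nat.card_le_card_of_surjective (fun i : Fin k => p i) fun v => by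
        obtain ⟨i, hi, rfl⟩ : ∃ i < k, p i = v := by
          by_contra! hv
          exact (Set.eq_empty_iff_forall_notMem.1 h) v hv
        exact ⟨⟨i, hi⟩, rfl⟩
    omega
  by_cases hmix : ∃ v ∈ O, (∃ i < k, S.adj (p i) v = true) ∧ ∃ j < k, S.adj v (p j) = true
  · obtain ⟨v, hv, ⟨i₀, hi₀, hin⟩, j₀, hj₀, hout⟩ := hmix
    obtain ⟨i, hi, h₁, h₂⟩ := exists_adj_adj_succ_mod hv hi₀ hj₀ hin hout
    exact ⟨_, k + 1, by omega, hp.insert hv hi h₁ h₂⟩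
  push Not at hmix
  set B := {v | v ∈ O ∧ ∀ i < k, S.adj (p i) v = true}
  have hB : ∀ v ∈ O, (∃ i < k, S.adj (p i) v = true) → v ∈ B := fun v hv ⟨i, hi, h⟩ =>
    ⟨hv, fun j hj =>
      S.adj_of_adj_eq_false (hv j hj).symm (by simpa using hmix v hv ⟨i, hi, h⟩ j hj)⟩
  obtain ⟨u, hu, a, ha, hua⟩ := (hS (p 0) v₀).exists_rel_mem_not_mem (s := Oᶜ)
    (fun h => h 0 hk rfl) (by simpa using hv₀)
  obtain ⟨i, hi, rfl⟩ : ∃ i < k, p i = u := by simpa [O] using hu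
  obtain ⟨a, haB, b, hbB, hab⟩ := (hS a (p 0)).exists_rel_mem_not_mem
    (hB a (by simpa using ha) ⟨i, hi, hua⟩) (fun h => h.1 0 hk rfl)
  have hbO : b ∈ O := fun j hj hb => by
    simp [← hb, S.adj_eq_false_of_adj (haB.2 j hj)] at hab
  have hbdom : ∀ j < k, S.adj b (p j) = true := fun j hj =>
    S.adj_of_adj_eq_false (hbO j hj) (by
      by_contra h
      exact hbB (hB b hbO ⟨j, hj, by simpa using h⟩))
  exact ⟨_, k + 2, by omega, hp.extend_two hk hbO haB.1 (S.ne_of_adj hab).symm hbdom haB.2 hab⟩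

lemma exists_isCycle_card [Finite X] (hS : S.Strong) (h : 2 ≤ Nat.card X) :
    ∃ p, S.IsCycle p (Nat.card X) := by
  classical
  have : Nontrivial X := Finite.one_lt_card_iff_nontrivial.1 h
  obtain ⟨v, w, hvw⟩ := exists_pair_ne X
  obtain ⟨p₃, hp₃⟩ := S.exists_isCycle_three hS hvw
  set P : ℕ → Prop := fun k => ∃ p, S.IsCycle p k
  set K := Nat.findGreatest P (Nat.card X)
  have hK : P K := Nat.findGreatest_spec hp₃.le_card ⟨p₃, hp₃⟩
  have h3K : 3 ≤ K := Nat.le_findGreatest (P := P) hp₃.le_card ⟨p₃, hp₃⟩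
  obtain ⟨p, hp⟩ := hK
  obtain hlt | heq := hp.le_card.lt_or_eq
  · obtain ⟨q, k', hk', hq⟩ := hp.exists_longer hS (by omega) hlt
    exact absurd ⟨q, hq⟩ (Nat.findGreatest_is_greatest (P := P) hk' hq.le_card)
  · exact ⟨p, heq ▸ hp⟩

theorem exists_equiv_fin_adj_add_one [Finite X] (hS : S.Strong) {m : ℕ} [NeZero m]
    (hm : Nat.card X = m) (h2 : 2 ≤ m) :
    ∃ e : Fin m ≃ X, ∀ i, S.adj (e i) (e (i + 1)) = true := by
  subst hm
  obtain ⟨p, hinj, hadj⟩ := S.exists_isCycle_card hS h2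
  have hf : Function.Injective fun i : Fin (Nat.card X) => p i :=
    fun i j h => Fin.ext (hinj i.isLt j.isLt h)
  refine ⟨Equiv.ofBijective _ (hf.bijective_of_nat_card_le (by simp)), fun i => ?_⟩
  have : ((i + 1 : Fin (Nat.card X)) : ℕ) = (i + 1) % Nat.card X := by simp [Fin.val_add]
  simpa [this] using hadj i i.isLt

end Cycle

section HamiltonianCycle

variable {m : ℕ} [NeZero m] (U : Tournament (Fin m))

lemma noncritical_of_forall_back_arc (hcyc : ∀ i, U.adj i (i + 1) = true) (c : Fin m)
    (H : ∀ k : ℕ, 1 ≤ k → k + 2 ≤ m → ∃ a b : ℕ, 1 ≤ a ∧ a ≤ k ∧ k < b ∧ b < m ∧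
      U.adj (c + b) (c + a) = true) :
    U.Noncritical c := by
  refine U.strong_restrict_of_path _ (N := m - 1) (fun i => c + ((i + 1 : ℕ) : Fin m))
    (fun i hi h => Fin.self_ne_add_natCast c (by omega) (by omega) h.symm)
    (fun x hx => ?_) (fun i _ => ?_) (fun k hk => ?_)
  · have hx0 : (x - c).val ≠ 0 := fun h => hx (sub_eq_zero.1 (Fin.val_eq_zero_iff.1 h))
    refine ⟨(x - c).val - 1, by have := (x - c).isLt; omega, ?_⟩
    rw [Nat.sub_add_cancel (Nat.one_le_iff_ne_zero.2 hx0), Fin.cast_val_eq_self, add_sub_cancel]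
  · simpa [add_assoc, one_add_one_eq_two] using hcyc (c + ((i + 1 : ℕ) : Fin m))
  · obtain ⟨a, b, ha, hak, hkb, hbm, hba⟩ := H (k + 1) (by omega) (by omega)
    refine ⟨a - 1, by omega, b - 1, by omega, by omega, ?_⟩
    rwa [Nat.sub_add_cancel ha, Nat.sub_add_cancel (by omega : 1 ≤ b)]

lemma noncritical_add_one_of_adj_add_two (hm : 3 ≤ m) (hcyc : ∀ i, U.adj i (i + 1) = true)
    {e : Fin m} (he : U.adj e (e + 2) = true) : U.Noncritical (e + 1) := by
  refine U.noncritical_of_forall_back_arc hcyc _ fun k hk₁ hk₂ =>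
    ⟨1, m - 1, le_rfl, hk₁, by omega, by omega, ?_⟩
  rw [Fin.natCast_sub_eq_neg (by omega)]
  convert he using 2 <;> push_cast <;> ring

def forwardTwoChords : Finset (Fin m) :=
  Finset.univ.filter fun s => U.adj s (s + 2) = true

variable {U}

lemma mem_forwardTwoChords {s : Fin m} : s ∈ U.forwardTwoChords ↔ U.adj s (s + 2) = true := by
  simp [forwardTwoChords]

lemma adj_add_two_of_not_mem_forwardTwoChords (hm : 3 ≤ m) {s : Fin m}
    (hs : s ∉ U.forwardTwoChords) : U.adj (s + 2) s = true :=
  U.adj_of_adj_eq_false (by simpa using Fin.self_ne_add_natCast s (a := 2) (by omega) hm)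
    (by simpa [mem_forwardTwoChords] using hs)

lemma card_forwardTwoChords_le (hm : 3 ≤ m) (hcyc : ∀ i, U.adj i (i + 1) = true) :
    U.forwardTwoChords.card ≤ Nat.card {x // U.Noncritical x} := by
  rw [← Finset.card_image_of_injective _ (add_left_injective 1)]
  refine card_le_card_noncritical _ fun x hx => ?_
  obtain ⟨e, he, rfl⟩ := Finset.mem_image.1 hx
  exact U.noncritical_add_one_of_adj_add_two hm hcyc (mem_forwardTwoChords.1 he)

lemma noncritical_of_not_mem_forwardTwoChords (hm : 4 ≤ m) (hcyc : ∀ i, U.adj i (i + 1) = true)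
    (c : Fin m) (h₁ : c + 1 ∉ U.forwardTwoChords)
    (h₂ : c + ((m - 3 : ℕ) : Fin m) ∉ U.forwardTwoChords)
    (hcons : ∀ k : ℕ, 2 ≤ k → k + 3 ≤ m → c + (k : Fin m) ∈ U.forwardTwoChords →
      c + ((k - 1 : ℕ) : Fin m) ∉ U.forwardTwoChords) :
    U.Noncritical c := by
  have hback : ∀ a : ℕ, c + (a : Fin m) ∉ U.forwardTwoChords →
      U.adj (c + ((a + 2 : ℕ) : Fin m)) (c + a) = true := fun a ha => by
    simpa [add_assoc] using adj_add_two_of_not_mem_forwardTwoChords (by omega) ha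
  refine U.noncritical_of_forall_back_arc hcyc c fun k hk₁ hk₂ => ?_
  by_cases hk : k = 1
  · exact ⟨1, 3, le_rfl, by omega, by omega, by omega, hback 1 (by simpa using h₁)⟩
  by_cases hk' : k + 2 = m
  · have := hback (m - 3) h₂
    rw [show m - 3 + 2 = m - 1 by omega] at this
    exact ⟨m - 3, m - 1, by omega, by omega, by omega, by omega, this⟩
  by_cases hkF : c + (k : Fin m) ∈ U.forwardTwoChords
  · have := hback (k - 1) (hcons k (by omega) (by omega) hkF)
    rw [show k - 1 + 2 = k + 1 by omega] at this
    exact ⟨k - 1, k + 1, by omega, by omega, by omega, by omega, this⟩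
  · exact ⟨k, k + 2, by omega, le_rfl, by omega, by omega, hback k hkF⟩

lemma three_le_card_noncritical_of_forwardTwoChords_subset (hm : 4 ≤ m)
    (hcyc : ∀ i, U.adj i (i + 1) = true) {e : Fin m} (hF : U.forwardTwoChords ⊆ {e}) :
    3 ≤ Nat.card {x // U.Noncritical x} := by
  have hoff : ∀ a : ℕ, 0 < a → a < m → e + (a : Fin m) ∉ U.forwardTwoChords := fun a h₀ ha h =>
    Fin.self_ne_add_natCast e h₀ ha (Finset.mem_singleton.1 (hF h)).symm
  have key : ∀ j : ℕ, j < 3 → U.Noncritical (e + j) := fun j hj =>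
    noncritical_of_not_mem_forwardTwoChords hm hcyc _
      (by simpa [add_assoc] using hoff (j + 1) (by omega) (by omega))
      (by simpa [add_assoc] using hoff (j + (m - 3)) (by omega) (by omega))
      fun k _ _ hk hk' => Fin.add_natCast_ne_add_natCast (e + (j : Fin m)) (a := k) (b := k - 1)
        (by omega) (by omega) (by omega)
        ((Finset.mem_singleton.1 (hF hk)).trans (Finset.mem_singleton.1 (hF hk')).symm)
  have hne : ∀ a b : ℕ, a < 3 → b < 3 → a ≠ b → e + (a : Fin m) ≠ e + b :=
    fun a b ha hb h => Fin.add_natCast_ne_add_natCast e (by omega) (by omega) h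
  exact three_le_card_noncritical (hne 0 1 (by omega) (by omega) (by omega))
    (hne 0 2 (by omega) (by omega) (by omega)) (hne 1 2 (by omega) (by omega) (by omega))
    (key 0 (by omega)) (key 1 (by omega)) (key 2 (by omega))

lemma noncritical_of_forwardTwoChords_eq_pair (hm : 4 ≤ m) (hcyc : ∀ i, U.adj i (i + 1) = true)
    {e e' : Fin m} (h₁ : e' ≠ e + 1) (h₂ : e ≠ e' + 1) (hF : U.forwardTwoChords = {e, e'})
    {c : Fin m} (hc₁ : c ≠ e - 1) (hc₂ : c ≠ e' - 1) (hc₃ : c ≠ e + 3) (hc₄ : c ≠ e' + 3) :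
    U.Noncritical c := by
  have hmem : ∀ {s}, s ∈ U.forwardTwoChords ↔ s = e ∨ s = e' := by simp [hF]
  have hm3 : ((m - 3 : ℕ) : Fin m) = -3 := by rw [Fin.natCast_sub_eq_neg (by omega)]; norm_num
  refine noncritical_of_not_mem_forwardTwoChords hm hcyc c ?_ ?_ fun k _ _ hk hk' => ?_
  · rw [hmem]
    rintro (h | h)
    · exact hc₁ (eq_sub_of_add_eq h)
    · exact hc₂ (eq_sub_of_add_eq h)
  · rw [hmem, hm3]
    rintro (h | h)
    · exact hc₃ (by rw [← h]; ring)
    · exact hc₄ (by rw [← h]; ring)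
  · rw [hmem] at hk hk'
    have hsucc : c + (k : Fin m) = c + ((k - 1 : ℕ) : Fin m) + 1 := by
      obtain ⟨d, rfl⟩ : ∃ d, k = d + 1 := ⟨k - 1, by omega⟩
      simp [add_assoc]
    have hk₀ : c + (k : Fin m) ≠ c + ((k - 1 : ℕ) : Fin m) :=
      Fin.add_natCast_ne_add_natCast c (by omega) (by omega) (by omega)
    rcases hk with h | h <;> rcases hk' with h' | h'
    · exact hk₀ (h.trans h'.symm)
    · exact h₂ (by rw [← h, ← h', hsucc])
    · exact h₁ (by rw [← h, ← h', hsucc])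
    · exact hk₀ (h.trans h'.symm)

lemma three_le_card_noncritical_of_forwardTwoChords_eq_pair (hm : 7 ≤ m)
    (hcyc : ∀ i, U.adj i (i + 1) = true) {e e' : Fin m} (hne : e ≠ e') (h₁ : e' ≠ e + 1)
    (h₂ : e ≠ e' + 1) (hF : U.forwardTwoChords = {e, e'}) :
    3 ≤ Nat.card {x // U.Noncritical x} := by
  classical
  obtain ⟨c, hc⟩ : ∃ c, c ∉ ({e - 1, e' - 1, e + 3, e' + 3, e + 1, e' + 1} : Finset (Fin m)) := by
    by_contra! h
    have := Finset.card_le_card fun x (_ : x ∈ Finset.univ) => h x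
    have := Finset.card_le_six (a := e - 1) (b := e' - 1) (c := e + 3) (d := e' + 3) (e := e + 1)
      (f := e' + 1)
    simp only [Finset.card_univ, Fintype.card_fin] at *
    omega
  simp only [Finset.mem_insert, Finset.mem_singleton, not_or] at hc
  obtain ⟨hc₁, hc₂, hc₃, hc₄, hc₅, hc₆⟩ := hc
  exact three_le_card_noncritical (fun h => hne (add_right_cancel h)) (Ne.symm hc₅) (Ne.symm hc₆)
    (noncritical_add_one_of_adj_add_two U (by omega) hcyc (mem_forwardTwoChords.1 (by simp [hF])))
    (noncritical_add_one_of_adj_add_two U (by omega) hcyc (mem_forwardTwoChords.1 (by simp [hF])))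
    (noncritical_of_forwardTwoChords_eq_pair (by omega) hcyc h₁ h₂ hF hc₁ hc₂ hc₃ hc₄)

variable (U) in
lemma iso_lineT_of_adj (hsucc : ∀ x : ℕ, x + 1 < m → U.adj x ((x + 1 : ℕ) : Fin m) = true)
    (hback : ∀ x y : ℕ, x + 2 ≤ y → y < m → U.adj y x = true) : U.Iso (lineT m) := by
  refine ⟨Equiv.refl _, fun a b => ?_⟩
  have hsucc' : ∀ a b : Fin m, b.val = a.val + 1 → U.adj a b = true := fun a b h => by
    simpa [← h] using hsucc a.val (by omega)
  have hback' : ∀ a b : Fin m, a.val + 2 ≤ b.val → U.adj b a = true := fun a b h => by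
    simpa using hback a.val b.val h b.isLt
  change U.adj a b = if a < b then decide (b.val = a.val + 1)
    else if b < a then !decide (a.val = b.val + 1) else false
  rcases lt_trichotomy a b with h | rfl | h
  · rw [if_pos h]
    by_cases hab : b.val = a.val + 1
    · simp [hab, hsucc' a b hab]
    · simp [hab, U.adj_eq_false_of_adj (hback' a b (by rw [Fin.lt_def] at h; omega))]
  · simp [U.irrefl]
  · rw [if_neg h.not_gt, if_pos h]
    by_cases hab : a.val = b.val + 1
    · simp [hab, U.adj_eq_false_of_adj (hsucc' b a hab)]
    · simp [hab, hback' b a (by rw [Fin.lt_def] at h; omega)]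

lemma noncritical_natCast_add_one_of_adj (hm : 3 ≤ m) (hcyc : ∀ i, U.adj i (i + 1) = true)
    (hback : ∀ s : ℕ, s + 3 ≤ m → U.adj ((s + 2 : ℕ) : Fin m) s = true) {x y : ℕ}
    (hxy : x + 3 ≤ y) (hy : y + 2 ≤ m) (h : U.adj x y = true) :
    U.Noncritical ((x + 1 : ℕ) : Fin m) := by
  refine U.noncritical_of_forall_back_arc hcyc _ fun k hk₁ hk₂ => ?_
  rcases Nat.lt_or_ge k (y - x - 1) with hk | hk
  · refine ⟨k, k + 2, hk₁, le_rfl, by omega, by omega, ?_⟩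
    simpa [add_assoc] using hback (x + 1 + k) (by omega)
  · refine ⟨y - x - 1, m - 1, by omega, hk, by omega, by omega, ?_⟩
    have hx : ((x + 1 : ℕ) : Fin m) + ((m - 1 : ℕ) : Fin m) = x := by
      rw [Fin.natCast_sub_eq_neg (by omega)]
      push_cast
      ring
    rwa [hx, ← Nat.cast_add, show x + 1 + (y - x - 1) = y by omega]

lemma noncritical_natCast_sub_two_of_adj (hm : 5 ≤ m) (hcyc : ∀ i, U.adj i (i + 1) = true)
    (hback : ∀ s : ℕ, s + 3 ≤ m → U.adj ((s + 2 : ℕ) : Fin m) s = true) {x : ℕ}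
    (hx₁ : 1 ≤ x) (hx : x + 4 ≤ m) (h : U.adj x ((m - 1 : ℕ) : Fin m) = true) :
    U.Noncritical ((m - 2 : ℕ) : Fin m) := by
  refine U.noncritical_of_forall_back_arc hcyc _ fun k hk₁ hk₂ => ?_
  have hc : ((m - 2 : ℕ) : Fin m) = -2 := by rw [Fin.natCast_sub_eq_neg (by omega)]; norm_num
  have hshift : ∀ a : ℕ, 2 ≤ a → ((m - 2 : ℕ) : Fin m) + a = ((a - 2 : ℕ) : Fin m) := by
    intro a ha
    obtain ⟨d, rfl⟩ : ∃ d, a = d + 2 := ⟨a - 2, by omega⟩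
    rw [hc, Nat.add_sub_cancel]
    push_cast
    ring
  rcases Nat.lt_or_ge k (x + 2) with hk | hk
  · refine ⟨1, x + 2, le_rfl, hk₁, by omega, by omega, ?_⟩
    rwa [hshift _ (by omega), Nat.add_sub_cancel, Nat.cast_one,
      show ((m - 2 : ℕ) : Fin m) + 1 = ((m - 1 : ℕ) : Fin m) by
        rw [← Nat.cast_add_one, show m - 2 + 1 = m - 1 by omega]]
  · rcases Nat.lt_or_ge (k + 2) m with hk' | hk'
    · refine ⟨k, k + 2, hk₁, le_rfl, by omega, by omega, ?_⟩
      rw [hshift _ (by omega), hshift _ (by omega), Nat.add_sub_cancel]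
      simpa [show k - 2 + 2 = k by omega] using hback (k - 2) (by omega)
    · refine ⟨m - 3, m - 1, by omega, by omega, by omega, by omega, ?_⟩
      rw [hshift _ (by omega), hshift _ (by omega)]
      have := hback (m - 5) (by omega)
      rwa [show m - 5 + 2 = m - 1 - 2 by omega, show m - 5 = m - 3 - 2 by omega] at this

lemma adj_natCast_add_two_of_forwardTwoChords_eq_neg (hm : 3 ≤ m)
    (hF : U.forwardTwoChords = {-2, -1}) (s : ℕ) (hs : s + 3 ≤ m) :
    U.adj ((s + 2 : ℕ) : Fin m) s = true := by
  have h₂ : ((m - 2 : ℕ) : Fin m) = -2 := by rw [Fin.natCast_sub_eq_neg (by omega)]; norm_num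
  have h₁ : ((m - 1 : ℕ) : Fin m) = -1 := by rw [Fin.natCast_sub_eq_neg (by omega)]; norm_num
  have hs : (s : Fin m) ∉ U.forwardTwoChords := by
    rw [hF, ← h₂, ← h₁]
    simp only [Finset.mem_insert, Finset.mem_singleton, not_or]
    exact ⟨Fin.natCast_ne_natCast (by omega) (by omega) (by omega),
      Fin.natCast_ne_natCast (by omega) (by omega) (by omega)⟩
  simpa using adj_add_two_of_not_mem_forwardTwoChords hm hs

lemma three_le_card_noncritical_or_iso_lineT_of_forwardTwoChords_eq_neg (hm : 5 ≤ m)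
    (hcyc : ∀ i, U.adj i (i + 1) = true) (hF : U.forwardTwoChords = {-2, -1}) :
    3 ≤ Nat.card {x // U.Noncritical x} ∨ U.Iso (lineT m) := by
  have h₁ : ((m - 1 : ℕ) : Fin m) = -1 := by rw [Fin.natCast_sub_eq_neg (by omega)]; norm_num
  have hN₀ : U.Noncritical ((0 : ℕ) : Fin m) := by
    simpa using noncritical_add_one_of_adj_add_two U (by omega) hcyc
      (mem_forwardTwoChords.1 (by simp [hF] : (-1 : Fin m) ∈ U.forwardTwoChords))
  have hN₁ : U.Noncritical ((m - 1 : ℕ) : Fin m) := by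
    rw [h₁, show (-1 : Fin m) = -2 + 1 by ring]
    exact noncritical_add_one_of_adj_add_two U (by omega) hcyc
      (mem_forwardTwoChords.1 (by simp [hF]))
  have hback := adj_natCast_add_two_of_forwardTwoChords_eq_neg (by omega) hF
  by_cases hall : ∀ x y : ℕ, x + 2 ≤ y → y < m → U.adj y x = true
  · exact .inr (U.iso_lineT_of_adj (fun x _ => by simpa using hcyc x) hall)
  push Not at hall
  obtain ⟨x, y, hxy, hym, hyx⟩ := hall
  have hxy' : U.adj x y = true :=
    U.adj_of_adj_eq_false (Fin.natCast_ne_natCast hym (by omega) (by omega)) (by simpa using hyx)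
  have hxy₃ : x + 3 ≤ y := by
    by_contra
    obtain rfl : y = x + 2 := by omega
    exact hyx (hback x (by omega))
  left
  rcases (show y + 2 ≤ m ∨ y = m - 1 by omega) with hy | rfl
  · exact three_le_card_noncritical (Fin.natCast_ne_natCast (by omega) (by omega) (by omega))
      (Fin.natCast_ne_natCast (by omega) (by omega) (by omega))
      (Fin.natCast_ne_natCast (by omega) (by omega) (by omega))
      hN₀ (U.noncritical_natCast_add_one_of_adj (by omega) hcyc hback hxy₃ hy hxy') hN₁
  · have hx₁ : 1 ≤ x := by
      by_contra
      obtain rfl : x = 0 := by omega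
      have := hcyc (-1)
      rw [neg_add_cancel] at this
      rw [Nat.cast_zero, h₁] at hxy'
      simp [U.adj_eq_false_of_adj this] at hxy'
    exact three_le_card_noncritical (Fin.natCast_ne_natCast (by omega) (by omega) (by omega))
      (Fin.natCast_ne_natCast (by omega) (by omega) (by omega))
      (Fin.natCast_ne_natCast (by omega) (by omega) (by omega))
      hN₀ (U.noncritical_natCast_sub_two_of_adj (by omega) hcyc hback hx₁ (by omega) hxy') hN₁

lemma three_le_card_noncritical_or_iso_lineT_of_forwardTwoChords_eq_succ (hm : 5 ≤ m)
    (hcyc : ∀ i, U.adj i (i + 1) = true) {e : Fin m} (hF : U.forwardTwoChords = {e, e + 1}) :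
    3 ≤ Nat.card {x // U.Noncritical x} ∨ U.Iso (lineT m) := by
  -- rotate the cycle so that the two forward 2-chords start at `-2` and `-1`
  set U' := U.comap (Equiv.addRight (e + 2))
  have hcyc' : ∀ i, U'.adj i (i + 1) = true := fun i => by
    change U.adj (i + (e + 2)) (i + 1 + (e + 2)) = true
    rw [add_right_comm]
    exact hcyc _
  have hF' : U'.forwardTwoChords = {-2, -1} := by
    ext s
    have : U'.adj s (s + 2) = U.adj (s + (e + 2)) (s + (e + 2) + 2) := by
      change U.adj (s + (e + 2)) (s + 2 + (e + 2)) = _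
      rw [add_right_comm s 2]
    rw [mem_forwardTwoChords, this, ← mem_forwardTwoChords, hF]
    simp only [Finset.mem_insert, Finset.mem_singleton]
    constructor
    · rintro (h | h)
      · exact .inl (by linear_combination h)
      · exact .inr (by linear_combination h)
    · rintro (rfl | rfl)
      · exact .inl (by ring)
      · exact .inr (by ring)
  rw [← card_noncritical_comap U (Equiv.addRight (e + 2))]
  exact (three_le_card_noncritical_or_iso_lineT_of_forwardTwoChords_eq_neg hm hcyc' hF').imp id
    fun h => (iso_comap U _).symm.trans h

theorem card_noncritical_of_adj_add_one (hm : 7 ≤ m) (hcyc : ∀ i, U.adj i (i + 1) = true) :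
    2 ≤ Nat.card {x // U.Noncritical x} ∧
      (3 ≤ Nat.card {x // U.Noncritical x} ∨ U.Iso (lineT m)) := by
  classical
  have hF := card_forwardTwoChords_le (by omega) hcyc
  rcases le_or_gt 3 U.forwardTwoChords.card with hge | hlt
  · exact ⟨by omega, .inl (by omega)⟩
  rcases le_or_gt U.forwardTwoChords.card 1 with hle | hgt
  · obtain ⟨e, he⟩ := Finset.card_le_one_iff_subset_singleton.1 hle
    have h₃ := three_le_card_noncritical_of_forwardTwoChords_subset (by omega) hcyc he
    exact ⟨by omega, .inl h₃⟩
  obtain ⟨e, e', hne, hee'⟩ := Finset.card_eq_two.1 (show U.forwardTwoChords.card = 2 by omega)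
  refine ⟨by omega, ?_⟩
  by_cases hsucc : e' = e + 1
  · exact three_le_card_noncritical_or_iso_lineT_of_forwardTwoChords_eq_succ (by omega) hcyc
      (hsucc ▸ hee')
  by_cases hsucc' : e = e' + 1
  · exact three_le_card_noncritical_or_iso_lineT_of_forwardTwoChords_eq_succ (by omega) hcyc
      (by rw [hee', Finset.pair_comm, hsucc'])
  exact .inl (three_le_card_noncritical_of_forwardTwoChords_eq_pair hm hcyc hne hsucc hsucc' hee')

end HamiltonianCycle

section Strong

variable [Finite X] {S : Tournament X}

lemma Strong.card_noncritical (hS : S.Strong) (hm : 7 ≤ Nat.card X) :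
    2 ≤ Nat.card {x // S.Noncritical x} ∧
      (3 ≤ Nat.card {x // S.Noncritical x} ∨ S.Iso (lineT (Nat.card X))) := by
  have : NeZero (Nat.card X) := ⟨by omega⟩
  obtain ⟨e, he⟩ := S.exists_equiv_fin_adj_add_one hS rfl (by omega)
  have h := (S.comap e).card_noncritical_of_adj_add_one hm he
  rw [card_noncritical_comap] at h
  exact ⟨h.1, h.2.imp id fun h' => (S.iso_comap e).symm.trans h'⟩

end Strong

section Counting

variable [Fintype V]

lemma card_sigma_le_two_mul_card_image_compl_pair [DecidableEq V] (W : Finset V)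
    (D : V → Finset V) :
    (W.sigma D).card ≤ 2 * ((W.sigma D).image fun p => ({p.1, p.2} : Finset V)ᶜ).card := by
  refine Finset.card_le_mul_card_image _ 2 fun s hs => ?_
  obtain ⟨⟨a, b⟩, -, rfl⟩ := Finset.mem_image.1 hs
  calc _ ≤ ({⟨a, b⟩, ⟨b, a⟩} : Finset (Σ _ : V, V)).card := by
        refine Finset.card_le_card fun ⟨x, y⟩ hxy => ?_
        have h : (({x, y} : Finset V) : Set V) = {a, b} := by
          rw [compl_inj_iff.1 (Finset.mem_filter.1 hxy).2]
          simp
        rw [Finset.coe_pair, Set.pair_eq_pair_iff] at h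
        rcases h with ⟨rfl, rfl⟩ | ⟨rfl, rfl⟩ <;> simp
    _ ≤ 2 := Finset.card_le_two

lemma card_le_strongSubCount (T : Tournament V) {ℓ : ℕ} (S : Finset (Finset V))
    (hS : ∀ s ∈ S, s.card = ℓ ∧ (T.restrict ↑s).Strong) : S.card ≤ T.strongSubCount ℓ := by
  classical
  rw [strongSubCount, Nat.card_eq_fintype_card, Fintype.card_subtype]
  exact Finset.card_le_card fun s hs => Finset.mem_filter.2 ⟨Finset.mem_univ s, hS s hs⟩

lemma strong_restrict_compl_pair [DecidableEq V] (T : Tournament V) {w : V}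
    {x : {y // y ∈ {y | y ≠ w}}} (hx : (T.restrict {y | y ≠ w}).Noncritical x) :
    (T.restrict ↑({w, x.1}ᶜ : Finset V)).Strong := by
  have hmem : ∀ y : V, y ∈ (↑({w, x.1}ᶜ : Finset V) : Set V) ↔ y ≠ w ∧ y ≠ x.1 := by
    simp [and_comm]
  refine Iso.strong ⟨⟨fun z => ⟨z.1.1, (hmem _).2 ⟨z.1.2, fun h => z.2 (Subtype.ext h)⟩⟩,
    fun y => ⟨⟨y.1, ((hmem _).1 y.2).1⟩, fun h => ((hmem _).1 y.2).2 (congrArg Subtype.val h)⟩,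
    fun _ => rfl, fun _ => rfl⟩, fun _ _ => rfl⟩ hx

open Classical in
noncomputable def strongPartners [DecidableEq V] (T : Tournament V) (w : V) : Finset V :=
  Finset.univ.filter fun x => x ≠ w ∧ (T.restrict ↑({w, x}ᶜ : Finset V)).Strong

lemma mem_strongPartners [DecidableEq V] {T : Tournament V} {w x : V} :
    x ∈ T.strongPartners w ↔ x ≠ w ∧ (T.restrict ↑({w, x}ᶜ : Finset V)).Strong := by
  simp [strongPartners]

lemma Noncritical.card_strongPartners [DecidableEq V] {T : Tournament V} {w : V}
    (hw : T.Noncritical w) (hn : 8 ≤ Fintype.card V) :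
    2 ≤ (T.strongPartners w).card ∧
      (¬ (T.restrict {x | x ≠ w}).Iso (lineT (Fintype.card V - 1)) →
        3 ≤ (T.strongPartners w).card) := by
  have hcard : Nat.card {x | x ≠ w} = Fintype.card V - 1 := by
    classical
    rw [Nat.card_eq_fintype_card, Fintype.card_ofFinset]
    simp [Finset.filter_ne']
  have hle : Nat.card {x // (T.restrict {x | x ≠ w}).Noncritical x} ≤
      (T.strongPartners w).card := by
    rw [← Nat.card_eq_finsetCard]
    refine Nat.card_le_card_of_injective (fun x =>
      ⟨x.1.1, mem_strongPartners.2 ⟨x.1.2, T.strong_restrict_compl_pair x.2⟩⟩) fun x y h => ?_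
    simp only [Subtype.mk.injEq] at h
    exact Subtype.ext (Subtype.ext h)
  obtain ⟨h₂, h₃⟩ := Strong.card_noncritical hw (by omega)
  rw [hcard] at h₃
  exact ⟨h₂.trans hle, fun hiso => (h₃.resolve_right hiso).trans hle⟩

theorem three_mul_card_noncritical_le (T : Tournament V) (hn : 8 ≤ Fintype.card V)
    (huniq : ∀ w₁ w₂ : V,
      (T.Noncritical w₁ ∧ (T.restrict {x | x ≠ w₁}).Iso (lineT (Fintype.card V - 1))) →
      (T.Noncritical w₂ ∧ (T.restrict {x | x ≠ w₂}).Iso (lineT (Fintype.card V - 1))) →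
      w₁ = w₂) :
    3 * Nat.card {x // T.Noncritical x} ≤ 2 * T.strongSubCount (Fintype.card V - 2) + 1 := by
  classical
  set NC := Finset.univ.filter fun x => T.Noncritical x
  have hNC : ∀ {w}, w ∈ NC → T.Noncritical w := fun hw => (Finset.mem_filter.1 hw).2
  have hsum : 3 * NC.card ≤ ∑ w ∈ NC, (T.strongPartners w).card + 1 :=
    NC.three_mul_card_le_sum_add_one _ _ (fun w hw => ((hNC hw).card_strongPartners hn).1)
      (fun w hw => ((hNC hw).card_strongPartners hn).2)
      fun a ha b hb hpa hpb => huniq a b ⟨hNC ha, hpa⟩ ⟨hNC hb, hpb⟩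
  have hpairs := card_sigma_le_two_mul_card_image_compl_pair NC T.strongPartners
  rw [Finset.card_sigma] at hpairs
  have hsub := T.card_le_strongSubCount (ℓ := Fintype.card V - 2)
      ((NC.sigma T.strongPartners).image fun p => ({p.1, p.2} : Finset V)ᶜ) fun s hs => by
    obtain ⟨⟨w, x⟩, hwx, rfl⟩ := Finset.mem_image.1 hs
    obtain ⟨hxw, hstrong⟩ := mem_strongPartners.1 (Finset.mem_sigma.1 hwx).2
    exact ⟨by rw [Finset.card_compl, Finset.card_pair hxw.symm], hstrong⟩
  have hcard : Nat.card {x // T.Noncritical x} = NC.card := by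
    rw [Nat.card_eq_fintype_card, Fintype.card_subtype]
  omega

end Counting

end Tournament

theorem statement_6_general (n : ℕ) (hn : 9 ≤ n) {V : Type} (T : Tournament V)
    (hcard : Nat.card V = n)
    (huniq : ∀ w1 w2 : V,
      (T.Noncritical w1 ∧ (T.restrict {x | x ≠ w1}).Iso (Tournament.lineT (n - 1))) →
      (T.Noncritical w2 ∧ (T.restrict {x | x ≠ w2}).Iso (Tournament.lineT (n - 1))) →
      w1 = w2) :
    (4 ≤ Nat.card {x : V // T.Noncritical x} → 6 ≤ T.strongSubCount (n - 2)) ∧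
    (5 ≤ Nat.card {x : V // T.Noncritical x} → 7 ≤ T.strongSubCount (n - 2)) := by
  have : Finite V := Nat.finite_of_card_ne_zero (by omega)
  have := Fintype.ofFinite V
  rw [Nat.card_eq_fintype_card] at hcard
  subst hcard
  have := T.three_mul_card_noncritical_le (by omega) huniq
  constructor <;> intro h <;> omega

/-- **Lemma 3.** Let `T` be a strongly connected tournament of order `n ≥ 9`
having at most one non-critical vertex `w` with `T - w ≅ T_{n-2,n-1}`.  If `T`
has at least `4` non-critical vertices then `s_{n-2}(T) ≥ 6`; if it has at
least `5` non-critical vertices then `s_{n-2}(T) ≥ 7`. -/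
theorem statement_6 (n : ℕ) (hn : 9 ≤ n) {V : Type} (T : Tournament V)
    (hcard : Nat.card V = n) (hT : T.Strong)
    (huniq : ∀ w1 w2 : V,
      (T.Noncritical w1 ∧ (T.restrict {x | x ≠ w1}).Iso (Tournament.lineT (n - 1))) →
      (T.Noncritical w2 ∧ (T.restrict {x | x ≠ w2}).Iso (Tournament.lineT (n - 1))) →
      w1 = w2) :
    (4 ≤ Nat.card {x : V // T.Noncritical x} → 6 ≤ T.strongSubCount (n - 2)) ∧
    (5 ≤ Nat.card {x : V // T.Noncritical x} → 7 ≤ T.strongSubCount (n - 2)) :=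
  statement_6_general n hn T hcard huniq
end

section
/- Let n > d ≥ 3 and let ℓ be an integer with 3 ≤ ℓ ≤ n satisfying n + d − 1 ≤ 2ℓ. Then the number of circuits of length ℓ in T_{d,n} equals the binomial coefficient C(n−d+1, n−ℓ). -/
/-- Block index used to describe `T_{d,n}`: the vertices `0,…,a-1` form the
first block (corresponding to `z_0` of `T_{d,d+1}`), the next `d-1` vertices
are the singleton blocks `z_1,…,z_{d-1}`, and the remaining vertices form the
last block (corresponding to `z_d`). -/
def blockIdx (a d x : ℕ) : ℕ :=
  if x < a then 0 else if x < a + d - 1 then x - a + 1 else d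

/-- The composition `T_{d,d+1}(TT_a, v_1, …, v_{d-1}, TT_b)` on `Fin n`
(`b = n - a - (d-1)`): within a block the tournament is transitive, and
between distinct blocks the arcs follow `T_{d,d+1}`. -/
def TdnAux (a d n : ℕ) : Tournament (Fin n) :=
  Tournament.ofFn fun i j => decide (blockIdx a d j.val ≤ blockIdx a d i.val + 1)

/-- `T_{d,n} = T_{d,d+1}(TT_{⌊(n-d+1)/2⌋}, v_1, …, v_{d-1}, TT_{⌈(n-d+1)/2⌉})`. -/
def Tdn (d n : ℕ) : Tournament (Fin n) := TdnAux ((n - d + 1) / 2) d n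

/-- `T_{d,n}^- = T_{d,d+1}(TT_{⌈(n-d+1)/2⌉}, v_1, …, v_{d-1}, TT_{⌊(n-d+1)/2⌋})`. -/
def Tdnm (d n : ℕ) : Tournament (Fin n) := TdnAux ((n - d + 2) / 2) d n

/-!
Number the vertices of `T_{d,n}` block by block, so that `TT_a`, `v_1, …, v_{d-1}`, `TT_b`
occupy consecutive intervals. An arc then points to a larger vertex exactly when it climbs at
most one block, and to a smaller one exactly when it drops at least two blocks; in particular a
circuit can only climb from block `k - 1` to block `k` through `v_k`. Hence a circuit avoiding
some `v_k` stays on one side of it, where there are fewer than `ℓ` vertices. A circuit through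
all the `v_k` moves on from each `v_k`, `k ≤ d - 2`, to `v_{k+1}`, so every drop of the circuit
runs from block `≥ d - 1` down to block `≤ 1`; as those low blocks are left only once, there is
exactly one drop. So the circuits are the rotations of the increasing enumerations of the
`ℓ`-sets containing `v_1, …, v_{d-1}`, and conversely each such enumeration is a circuit, which
gives `C(n - d + 1, ℓ - d + 1)` circuits.
-/

open Finset Function

section Cyclic

variable {ℓ : ℕ} [NeZero ℓ]

theorem Fin.exists_cyclic_exit {p : Fin ℓ → Prop} {i j : Fin ℓ} (hi : p i) (hj : ¬ p j) :
    ∃ k, p k ∧ ¬ p (k + 1) := by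
  obtain ⟨m, rfl⟩ := Nat.exists_eq_add_one_of_ne_zero (NeZero.ne ℓ)
  by_contra! hstep
  have hall : ∀ t : Fin (m + 1), p (i + t) := by
    intro t
    induction t using Fin.induction with
    | zero => simpa using hi
    | succ t ih => rw [← Fin.coeSucc_eq_succ, ← add_assoc]; exact hstep _ ih
  exact hj (by simpa using hall (j - i))

theorem Fin.card_cyclic_exits_eq (p : Fin ℓ → Prop) [DecidablePred p] :
    #{k | p k ∧ ¬ p (k + 1)} = #{k | ¬ p k ∧ p (k + 1)} := by
  have hshift : #{k | p (k + 1)} = #{k | p k} :=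
    card_bij' (fun k _ => k + 1) (fun k _ => k - 1) (by simp) (by simp) (by simp) (by simp)
  have h₁ := card_filter_add_card_filter_not (s := {k | p k}) (fun k => p (k + 1))
  have h₂ := card_filter_add_card_filter_not (s := {k | p (k + 1)}) p
  simp only [filter_filter] at h₁ h₂
  have : #{k | p (k + 1) ∧ p k} = #{k | p k ∧ p (k + 1)} := by simp only [and_comm]
  have : #{k | p (k + 1) ∧ ¬ p k} = #{k | ¬ p k ∧ p (k + 1)} := by simp only [and_comm]
  omega

theorem Fin.ne_add_one (hℓ : 2 ≤ ℓ) (i : Fin ℓ) : i ≠ i + 1 := by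
  simp only [ne_eq, left_eq_add, Fin.one_eq_zero_iff]
  omega

variable {α : Type*} [LinearOrder α]

def AtMostOneCyclicDescent (f : Fin ℓ → α) : Prop :=
  ∀ i j, f (i + 1) < f i → f (j + 1) < f j → i = j

namespace Finset

variable (M : Finset α) (hM : M.card = ℓ)

theorem range_orderEmbOfFin_sub (r : Fin ℓ) :
    Set.range (fun k => M.orderEmbOfFin hM (k - r)) = M := by
  rw [← M.range_orderEmbOfFin hM]
  exact (Equiv.subRight r).surjective.range_comp _

theorem atMostOneCyclicDescent_orderEmbOfFin_sub (r : Fin ℓ) :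
    AtMostOneCyclicDescent fun k => M.orderEmbOfFin hM (k - r) := by
  obtain ⟨m, rfl⟩ := Nat.exists_eq_add_one_of_ne_zero (NeZero.ne ℓ)
  have hlast : ∀ k, M.orderEmbOfFin hM (k + 1 - r) < M.orderEmbOfFin hM (k - r) →
      k - r = Fin.last m := by
    intro k hk
    rw [add_sub_right_comm, OrderEmbedding.lt_iff_lt] at hk
    exact Fin.add_one_le_iff.1 hk.le
  intro i j hi hj
  exact sub_left_injective ((hlast i hi).trans (hlast j hj).symm)

variable {M hM}

theorem orderEmbOfFin_add_one_le_of_lt {j : Fin ℓ} {x : α} (hx : x ∈ M)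
    (hjx : M.orderEmbOfFin hM j < x) : M.orderEmbOfFin hM (j + 1) ≤ x := by
  obtain ⟨m, rfl⟩ := Nat.exists_eq_add_one_of_ne_zero (NeZero.ne ℓ)
  obtain ⟨i, rfl⟩ : x ∈ Set.range (M.orderEmbOfFin hM) := by rwa [range_orderEmbOfFin]
  rw [OrderEmbedding.lt_iff_lt] at hjx
  exact (M.orderEmbOfFin hM).monotone (Fin.add_one_le_of_lt hjx)

theorem mem_Icc_of_orderEmbOfFin_add_one_lt {j : Fin ℓ} {x : α} (hx : x ∈ M)
    (hj : M.orderEmbOfFin hM (j + 1) < M.orderEmbOfFin hM j) :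
    x ∈ Set.Icc (M.orderEmbOfFin hM (j + 1)) (M.orderEmbOfFin hM j) := by
  obtain ⟨m, rfl⟩ := Nat.exists_eq_add_one_of_ne_zero (NeZero.ne ℓ)
  obtain ⟨i, rfl⟩ : x ∈ Set.range (M.orderEmbOfFin hM) := by rwa [range_orderEmbOfFin]
  rw [OrderEmbedding.lt_iff_lt] at hj
  obtain rfl := Fin.add_one_le_iff.1 hj.le
  simp only [Fin.last_add_one, Set.mem_Icc, OrderEmbedding.le_iff_le]
  exact ⟨Fin.zero_le i, Fin.le_last i⟩

end Finset

theorem AtMostOneCyclicDescent.exists_eq_orderEmbOfFin_sub {f : Fin ℓ → α}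
    (hdesc : AtMostOneCyclicDescent f) (hf : Injective f) :
    ∃ (M : Finset α) (hM : M.card = ℓ) (r : Fin ℓ),
      f = fun k => M.orderEmbOfFin hM (k - r) := by
  classical
  obtain ⟨m, rfl⟩ := Nat.exists_eq_add_one_of_ne_zero (NeZero.ne ℓ)
  have hM : (univ.image f).card = m + 1 := by simp [card_image_of_injective _ hf]
  obtain ⟨r, -, hr⟩ := exists_min_image univ f univ_nonempty
  have hmono : StrictMono fun k => f (k + r) := by
    rw [Fin.strictMono_iff_lt_succ]
    intro i
    rw [← Fin.coeSucc_eq_succ, add_right_comm]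
    have hne := Fin.ne_add_one (by have := i.pos; omega : 2 ≤ m + 1)
    refine lt_of_le_of_ne (not_lt.1 fun hlt => ?_) (hf.ne (hne _))
    -- a descent at `i.castSucc + r` would be a second one besides the descent into `f r`
    have hwrap : f (r - 1 + 1) < f (r - 1) := by
      have := (hne (r - 1)).symm
      rw [sub_add_cancel] at this ⊢
      exact (hr _ (mem_univ _)).lt_of_ne (hf.ne this)
    have h := hdesc _ _ hlt hwrap
    have h0 : i.castSucc + 1 = 0 :=
      add_right_cancel (b := r) (by rw [add_right_comm, h, sub_add_cancel, zero_add])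
    exact Fin.succ_ne_zero i (by rwa [Fin.coeSucc_eq_succ] at h0)
  refine ⟨univ.image f, hM, r, funext fun k => ?_⟩
  rw [← orderEmbOfFin_unique hM (fun k => mem_image_of_mem f (mem_univ _)) hmono]
  simp

theorem card_injective_atMostOneCyclicDescent (Q : Set α → Prop) :
    Nat.card {f : Fin ℓ → α // Injective f ∧ AtMostOneCyclicDescent f ∧ Q (Set.range f)} =
      Nat.card {M : Finset α // M.card = ℓ ∧ Q M} * ℓ := by
  let g : {M : Finset α // M.card = ℓ ∧ Q M} × Fin ℓ →
      {f : Fin ℓ → α // Injective f ∧ AtMostOneCyclicDescent f ∧ Q (Set.range f)} :=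
    fun p =>
    ⟨fun k => p.1.1.orderEmbOfFin p.1.2.1 (k - p.2),
      (p.1.1.orderEmbOfFin p.1.2.1).injective.comp (sub_left_injective),
      p.1.1.atMostOneCyclicDescent_orderEmbOfFin_sub p.1.2.1 p.2,
      by rw [Finset.range_orderEmbOfFin_sub]; exact p.1.2.2⟩
  have hg : Bijective g := by
    constructor
    · rintro ⟨⟨M, hM, hQ⟩, r⟩ ⟨⟨M', hM', hQ'⟩, r'⟩ hpq
      have hfun := congrArg Subtype.val hpq
      obtain rfl : M = M' := by
        have := congrArg Set.range hfun
        simp only [g, Finset.range_orderEmbOfFin_sub, Finset.coe_inj] at this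
        exact this
      have hr : (0 : Fin ℓ) = r - r' := by simpa [g] using congrFun hfun r
      rw [eq_comm, sub_eq_zero] at hr
      subst hr
      rfl
    · rintro ⟨f, hf, hdesc, hQ⟩
      obtain ⟨M, hM, r, rfl⟩ := hdesc.exists_eq_orderEmbOfFin_sub hf
      exact ⟨(⟨M, hM, by rwa [Finset.range_orderEmbOfFin_sub] at hQ⟩, r), rfl⟩
  rw [← Nat.card_congr (Equiv.ofBijective g hg), Nat.card_prod,
    Nat.card_eq_fintype_card (α := Fin ℓ), Fintype.card_fin]

end Cyclic

theorem Finset.natCard_subtype_card_eq_and_subset {α : Type*} [Fintype α] [DecidableEq α]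
    (Z : Finset α) {ℓ : ℕ} (hZ : #Z ≤ ℓ) :
    Nat.card {M : Finset α // M.card = ℓ ∧ Z ⊆ M} =
      (Fintype.card α - #Z).choose (ℓ - #Z) := by
  rw [Nat.card_eq_fintype_card, Fintype.card_subtype, ← card_univ,
    ← card_filter_powersetCard_subset Z univ ℓ (subset_univ Z) hZ]
  congr 1
  ext M
  simp

theorem Fintype.card_le_of_injective_of_mem_Ico {β : Type*} [Fintype β] {g : β → ℕ}
    (hg : Injective g) {lo hi : ℕ} (h : ∀ b, g b ∈ Set.Ico lo hi) :
    Fintype.card β ≤ hi - lo := by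
  simpa using card_le_card_of_injOn g (s := univ) (t := Ico lo hi) (by simpa using h) hg.injOn

namespace Tournament

variable {V : Type*} {ℓ : ℕ}

def IsCircuit (T : Tournament V) (f : Fin ℓ → V) : Prop :=
  Injective f ∧ ∀ i, T.adj (f i) (f (cyc i)) = true

theorem circCount_eq_natCard_isCircuit (T : Tournament V) (ℓ : ℕ) :
    T.circCount ℓ = Nat.card {f : Fin ℓ → V // T.IsCircuit f} / ℓ :=
  rfl

theorem cyc_eq_add_one [NeZero ℓ] (i : Fin ℓ) : cyc i = i + 1 := by
  obtain ⟨m, rfl⟩ := Nat.exists_eq_add_one_of_ne_zero (NeZero.ne ℓ)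
  rw [Fin.ext_iff, Fin.val_add_one, cyc]
  by_cases h : i = Fin.last m
  · simp [h]
  · simp [h, Fin.val_lt_last h]

theorem isCircuit_iff [NeZero ℓ] {T : Tournament V} {f : Fin ℓ → V} :
    T.IsCircuit f ↔ Injective f ∧ ∀ i, T.adj (f i) (f (i + 1)) = true := by
  simp only [IsCircuit, cyc_eq_add_one]

end Tournament

section blockIdx

variable {a d : ℕ}

theorem blockIdx_mono (a d : ℕ) : Monotone (blockIdx a d) := by
  intro x y h
  unfold blockIdx
  split_ifs <;> omega

theorem blockIdx_le (a d x : ℕ) : blockIdx a d x ≤ d := by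
  unfold blockIdx
  split_ifs <;> omega

theorem blockIdx_eq_iff {k x : ℕ} (hk : 1 ≤ k) (hkd : k ≤ d - 1) :
    blockIdx a d x = k ↔ x = a + k - 1 := by
  unfold blockIdx
  split_ifs <;> omega

theorem blockIdx_le_iff {c x : ℕ} (hc : c < d) : blockIdx a d x ≤ c ↔ x < a + c := by
  unfold blockIdx
  split_ifs <;> omega

theorem eq_of_blockIdx_eq {x y : ℕ} (h : blockIdx a d x = blockIdx a d y)
    (h₁ : 1 ≤ blockIdx a d x) (h₂ : blockIdx a d x ≤ d - 1) : x = y := by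
  rw [h] at h₁ h₂
  have hx := (blockIdx_eq_iff h₁ h₂).1 h
  have hy := (blockIdx_eq_iff (x := y) h₁ h₂).1 rfl
  omega

end blockIdx

/-- The vertices `v_1, …, v_{d-1}` of `TdnAux a d n`. -/
def middleVertices (a d n : ℕ) : Finset (Fin n) :=
  {x | 1 ≤ blockIdx a d x ∧ blockIdx a d x ≤ d - 1}

theorem card_middleVertices {a d n : ℕ} (hn : a + d - 1 ≤ n) :
    #(middleVertices a d n) = d - 1 := by
  have : (middleVertices a d n).map Fin.valEmbedding = Ico a (a + d - 1) := by
    ext x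
    simp only [middleVertices, mem_map, mem_filter, mem_univ, true_and, Fin.valEmbedding_apply,
      mem_Ico]
    constructor
    · rintro ⟨x, hx, rfl⟩
      unfold blockIdx at hx
      split_ifs at hx <;> omega
    · intro hx
      refine ⟨⟨x, by omega⟩, ?_, rfl⟩
      show 1 ≤ blockIdx a d x ∧ blockIdx a d x ≤ d - 1
      unfold blockIdx
      split_ifs <;> omega
  rw [← card_map, this, Nat.card_Ico]
  omega

namespace TdnAux

variable {a d n : ℕ}

theorem adj_iff {u v : Fin n} :
    (TdnAux a d n).adj u v = true ↔
      u < v ∧ blockIdx a d v ≤ blockIdx a d u + 1 ∨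
        v < u ∧ blockIdx a d v + 2 ≤ blockIdx a d u := by
  show (if u < v then _ else if v < u then _ else false) = true ↔ _
  rcases lt_trichotomy u v with h | rfl | h
  · simp [h, h.not_gt]
  · simp
  · simp only [h.not_gt, ↓reduceIte, h, Bool.not_eq_eq_eq_not, Bool.not_true,
      decide_eq_false_iff_not, not_le, false_and, true_and, false_or]
    omega

theorem blockIdx_eq_of_adj {u v : Fin n} (h : (TdnAux a d n).adj u v = true) {c : ℕ}
    (hu : blockIdx a d u ≤ c) (hv : c < blockIdx a d v) :
    blockIdx a d u = c ∧ blockIdx a d v = c + 1 := by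
  rcases adj_iff.1 h with ⟨-, h⟩ | ⟨hvu, -⟩
  · omega
  · have := blockIdx_mono a d (Fin.le_def.1 hvu.le)
    omega

variable {ℓ : ℕ} [NeZero ℓ] {f : Fin ℓ → Fin n}

section Cycle

variable (hf : Injective f) (hadj : ∀ i, (TdnAux a d n).adj (f i) (f (i + 1)) = true)
include hf hadj

theorem exists_blockIdx_eq_of_cycle (hA : a + d - 1 ≤ ℓ) (hB : n ≤ a + ℓ) {k : ℕ}
    (hk : 1 ≤ k) (hkd : k ≤ d - 1) : ∃ i, blockIdx a d (f i) = k := by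
  by_contra! hmiss
  have hbelow : ∀ i j, blockIdx a d (f i) ≤ k - 1 → blockIdx a d (f j) ≤ k - 1 := by
    intro i j hi
    by_contra hj
    obtain ⟨t, ht, ht'⟩ :=
      Fin.exists_cyclic_exit (p := fun i => blockIdx a d (f i) ≤ k - 1) hi hj
    have := (blockIdx_eq_of_adj (hadj t) ht (not_le.1 ht')).2
    exact hmiss (t + 1) (by omega)
  have hinj : Injective fun i => (f i : ℕ) := Fin.val_injective.comp hf
  by_cases hlow : ∃ i, blockIdx a d (f i) ≤ k - 1
  · obtain ⟨i, hi⟩ := hlow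
    have := Fintype.card_le_of_injective_of_mem_Ico hinj (lo := 0) (hi := a + (k - 1))
      fun j => ⟨Nat.zero_le _, (blockIdx_le_iff (by omega)).1 (hbelow i j hi)⟩
    rw [Fintype.card_fin] at this
    omega
  · simp only [not_exists, not_le] at hlow
    have hhigh : ∀ j, a + k ≤ (f j : ℕ) := fun j => by
      have := hlow j
      have := hmiss j
      rw [← not_lt, ← blockIdx_le_iff (by omega : k < d)]
      omega
    have := Fintype.card_le_of_injective_of_mem_Ico hinj (lo := a + k) (hi := n)
      fun j => ⟨hhigh j, (f j).isLt⟩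
    rw [Fintype.card_fin] at this
    omega

theorem blockIdx_add_one_of_cycle
    (hcover : ∀ k, 1 ≤ k → k ≤ d - 1 → ∃ i, blockIdx a d (f i) = k)
    {i : Fin ℓ} {k : ℕ} (hk : 1 ≤ k) (hkd : k ≤ d - 2) (hi : blockIdx a d (f i) = k) :
    blockIdx a d (f (i + 1)) = k + 1 := by
  obtain ⟨j, hj⟩ := hcover (k + 1) (by omega) (by omega)
  obtain ⟨t, ht, ht'⟩ := Fin.exists_cyclic_exit (p := fun i => blockIdx a d (f i) ≤ k)
    hi.le (j := j) (by omega)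
  obtain ⟨htk, ht₁⟩ := blockIdx_eq_of_adj (hadj t) ht (not_le.1 ht')
  obtain rfl : t = i := hf (Fin.ext (eq_of_blockIdx_eq (htk.trans hi.symm) (by omega) (by omega)))
  exact ht₁

theorem blockIdx_of_cycle_descent (hd : 3 ≤ d)
    (hcover : ∀ k, 1 ≤ k → k ≤ d - 1 → ∃ i, blockIdx a d (f i) = k)
    {i : Fin ℓ} (hi : f (i + 1) < f i) :
    blockIdx a d (f (i + 1)) ≤ 1 ∧ d - 1 ≤ blockIdx a d (f i) := by
  have hdrop : blockIdx a d (f (i + 1)) + 2 ≤ blockIdx a d (f i) := by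
    rcases adj_iff.1 (hadj i) with ⟨hlt, -⟩ | ⟨-, h⟩
    · exact absurd hi hlt.not_gt
    · exact h
  have hle := blockIdx_le a d (f i)
  constructor
  · by_contra! hq
    obtain ⟨j, hj⟩ := hcover (blockIdx a d (f (i + 1)) - 1) (by omega) (by omega)
    have hj₁ := blockIdx_add_one_of_cycle hf hadj hcover (by omega) (by omega) hj
    have heq : blockIdx a d (f (j + 1)) = blockIdx a d (f (i + 1)) := by omega
    obtain rfl : j = i :=
      add_right_cancel (hf (Fin.ext (eq_of_blockIdx_eq heq (by omega) (by omega))))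
    omega
  · by_contra! hp
    have := blockIdx_add_one_of_cycle hf hadj hcover (i := i) (by omega) (by omega) rfl
    omega

theorem atMostOneCyclicDescent_of_cycle (hd : 3 ≤ d)
    (hcover : ∀ k, 1 ≤ k → k ≤ d - 1 → ∃ i, blockIdx a d (f i) = k) :
    AtMostOneCyclicDescent f := by
  classical
  -- every descent enters the blocks `≤ 1`, which are left only by the arc into `v_2`
  have hexits : #{k | blockIdx a d (f k) ≤ 1 ∧ ¬ blockIdx a d (f (k + 1)) ≤ 1} ≤ 1 := by
    refine card_le_one.2 fun s hs t ht => ?_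
    simp only [mem_filter, mem_univ, true_and, not_le] at hs ht
    have hs₂ := (blockIdx_eq_of_adj (hadj s) hs.1 hs.2).2
    have ht₂ := (blockIdx_eq_of_adj (hadj t) ht.1 ht.2).2
    exact add_right_cancel
      (hf (Fin.ext (eq_of_blockIdx_eq (hs₂.trans ht₂.symm) (by omega) (by omega))))
  rw [Fin.card_cyclic_exits_eq] at hexits
  intro i j hi hj
  have hi' := blockIdx_of_cycle_descent hf hadj hd hcover hi
  have hj' := blockIdx_of_cycle_descent hf hadj hd hcover hj
  exact card_le_one.1 hexits i (by simp only [not_le, mem_filter, mem_univ, true_and]; omega)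
    j (by simp only [not_le, mem_filter, mem_univ, true_and]; omega)

end Cycle

theorem adj_orderEmbOfFin (hd : 3 ≤ d) (hn : a + d - 1 ≤ n) {M : Finset (Fin n)}
    (hM : M.card = ℓ) (hdℓ : d ≤ ℓ) (hZ : middleVertices a d n ⊆ M) (j : Fin ℓ) :
    (TdnAux a d n).adj (M.orderEmbOfFin hM j) (M.orderEmbOfFin hM (j + 1)) = true := by
  set e := M.orderEmbOfFin hM
  have hmid : ∀ k, 1 ≤ k → k ≤ d - 1 → ∃ z ∈ M, blockIdx a d z = k := fun k hk hkd =>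
    have hz : blockIdx a d (a + k - 1) = k := (blockIdx_eq_iff hk hkd).2 rfl
    ⟨⟨a + k - 1, by omega⟩,
      hZ (by simp only [middleVertices, mem_filter, mem_univ, hz, true_and]; omega), hz⟩
  have hne : e j ≠ e (j + 1) := e.injective.ne (Fin.ne_add_one (by omega) j)
  rw [adj_iff]
  rcases hne.lt_or_gt with hlt | hgt
  · refine .inl ⟨hlt, not_lt.1 fun hjump => ?_⟩
    obtain ⟨z, hzM, hz⟩ := hmid (blockIdx a d (e j) + 1) (by omega)
      (by have := blockIdx_le a d (e (j + 1)); omega)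
    have h₁ : e j < z := (blockIdx_mono a d).reflect_lt (by omega)
    have h₂ : z < e (j + 1) := (blockIdx_mono a d).reflect_lt (by omega)
    exact (Finset.orderEmbOfFin_add_one_le_of_lt hzM h₁).not_gt h₂
  · refine .inr ⟨hgt, not_lt.1 fun hjump => ?_⟩
    obtain ⟨z₁, hz₁M, hz₁⟩ := hmid 1 le_rfl (by omega)
    obtain ⟨z₂, hz₂M, hz₂⟩ := hmid (d - 1) (by omega) le_rfl
    have hmin : blockIdx a d (e (j + 1)) ≤ blockIdx a d z₁ :=
      blockIdx_mono a d (Finset.mem_Icc_of_orderEmbOfFin_add_one_lt hz₁M hgt).1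
    have hmax : blockIdx a d z₂ ≤ blockIdx a d (e j) :=
      blockIdx_mono a d (Finset.mem_Icc_of_orderEmbOfFin_add_one_lt hz₂M hgt).2
    -- without the drop, `M` would consist of middle vertices only
    have hsub : M ⊆ middleVertices a d n := fun x hx => by
      have hx' := Finset.mem_Icc_of_orderEmbOfFin_add_one_lt hx hgt
      have : blockIdx a d (e (j + 1)) ≤ blockIdx a d x := blockIdx_mono a d hx'.1
      have : blockIdx a d x ≤ blockIdx a d (e j) := blockIdx_mono a d hx'.2
      simp only [middleVertices, mem_filter, mem_univ, true_and]
      omega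
    have := card_le_card hsub
    rw [hM, card_middleVertices hn] at this
    omega

theorem isCircuit_iff (hd : 3 ≤ d) (hn : a + d - 1 ≤ n) (hA : a + d - 1 ≤ ℓ)
    (hB : n ≤ a + ℓ) (hdℓ : d ≤ ℓ) :
    (TdnAux a d n).IsCircuit f ↔
      Injective f ∧ AtMostOneCyclicDescent f ∧ ↑(middleVertices a d n) ⊆ Set.range f := by
  rw [Tournament.isCircuit_iff]
  constructor
  · rintro ⟨hf, hadj⟩
    have hcover := fun k => exists_blockIdx_eq_of_cycle hf hadj hA hB (k := k)
    refine ⟨hf, atMostOneCyclicDescent_of_cycle hf hadj hd hcover, fun x hx => ?_⟩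
    replace hx : 1 ≤ blockIdx a d x ∧ blockIdx a d x ≤ d - 1 := by
      simpa [middleVertices] using hx
    obtain ⟨i, hi⟩ := hcover _ hx.1 hx.2
    exact ⟨i, Fin.ext (eq_of_blockIdx_eq hi (by omega) (by omega))⟩
  · rintro ⟨hf, hdesc, hZ⟩
    obtain ⟨M, hM, r, rfl⟩ := hdesc.exists_eq_orderEmbOfFin_sub hf
    rw [Finset.range_orderEmbOfFin_sub, coe_subset] at hZ
    refine ⟨hf, fun k => ?_⟩
    beta_reduce
    rw [add_sub_right_comm]
    exact adj_orderEmbOfFin hd hn hM hdℓ hZ (k - r)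

omit [NeZero ℓ] in
theorem circCount_eq (hd : 3 ≤ d) (hn : a + d - 1 ≤ n) (hA : a + d - 1 ≤ ℓ)
    (hB : n ≤ a + ℓ) (hdℓ : d ≤ ℓ) :
    (TdnAux a d n).circCount ℓ = (n - (d - 1)).choose (ℓ - (d - 1)) := by
  have : NeZero ℓ := ⟨by omega⟩
  have hcircuits : Nat.card {f : Fin ℓ → Fin n // (TdnAux a d n).IsCircuit f} =
      Nat.card {M : Finset (Fin n) // M.card = ℓ ∧ middleVertices a d n ⊆ M} * ℓ := by
    simp only [isCircuit_iff hd hn hA hB hdℓ, card_injective_atMostOneCyclicDescent, coe_subset]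
  rw [Tournament.circCount_eq_natCard_isCircuit, hcircuits, Nat.mul_div_cancel _ (by omega),
    Finset.natCard_subtype_card_eq_and_subset _ (by rw [card_middleVertices hn]; omega),
    card_middleVertices hn, Fintype.card_fin]

end TdnAux

theorem statement_14_general (n d ℓ : ℕ) (hd : 3 ≤ d) (hdn : d < n)
    (hℓ2 : ℓ ≤ n) (h : n + d - 1 ≤ 2 * ℓ) :
    (Tdn d n).circCount ℓ = Nat.choose (n - d + 1) (n - ℓ) := by
  rw [Tdn, TdnAux.circCount_eq hd (by omega) (by omega) (by omega) (by omega),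
    show n - (d - 1) = n - d + 1 by omega]
  exact Nat.choose_symm_of_eq_add (by omega)

/-- For `n > d ≥ 3` and `3 ≤ ℓ ≤ n` with `n + d - 1 ≤ 2ℓ`,
`c_ℓ(T_{d,n}) = C(n-d+1, n-ℓ)`. -/
theorem statement_14 (n d ℓ : ℕ) (hd : 3 ≤ d) (hdn : d < n)
    (hℓ1 : 3 ≤ ℓ) (hℓ2 : ℓ ≤ n) (h : n + d - 1 ≤ 2 * ℓ) :
    (Tdn d n).circCount ℓ = Nat.choose (n - d + 1) (n - ℓ) :=
  statement_14_general n d ℓ hd hdn hℓ2 h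
end
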